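/- Let c : Fin r → ℝ with ρ² := ∑_{i < r} (c i)² > 0, let σ > 0, and set h = σ²/ρ². Define the predictive risk p(α) = ∑_{i < r} (α² / ((s i)² + α)²) (c i)² + σ² ∑_{i < r} (s i)⁴ / ((s i)² + α)². If α* ∈ (0, (s 0)²/2) is a minimizer of T_h over [0, (s 0)²/2] and α* ≤ (s 0)^(4/3) · (min_{i < r} s i)^(2/3), then deriv p α* ≥ 0. -/

import Mathlib

/-- The PRO function `T_h(α) = f₁(α) + h·f₂(α)` for Tikhonov regularization. -/
noncomputable def proT (r : ℕ) (hr : 0 < r) (s : Fin r → ℝ) (h : ℝ) (α : ℝ) : ℝ :=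
  α ^ 2 / (α + (s ⟨0, hr⟩) ^ 2) ^ 2 + h * ∑ i, (s i) ^ 4 / (α + (s i) ^ 2) ^ 2

/-!
At an interior minimizer `α*` of `T_h`, the first-order condition `T_h'(α*) = 0` reads
`h ∑ sᵢ⁴/(sᵢ² + α*)³ = α* s₀²/(s₀² + α*)³`. Since `σ² = h ρ²`, substituting it into the noise part
of `p'(α*)` gives `p'(α*) = 2α* ∑ cᵢ² (g(sᵢ²) - g(s₀²))` with `g(x) = x/(x + α*)³`. The function `g`
is not monotone, but `g(x) ≥ g(y)` for `x ≤ y` as long as `α*³ ≤ x y²`, and the hypothesis on `α*`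
is exactly `α*³ ≤ s₀⁴ (minᵢ sᵢ)²`.
-/

open Finset

section Derivatives

variable {x a : ℝ}

theorem hasDerivAt_const_div_add_sq (u : ℝ) (hxa : x + a ≠ 0) :
    HasDerivAt (fun α : ℝ => u / (x + α) ^ 2) (-(2 * u / (x + a) ^ 3)) a := by
  have hden : HasDerivAt (fun α : ℝ => (x + α) ^ 2) (2 * (x + a)) a := by
    simpa using ((hasDerivAt_id a).const_add x).fun_pow 2
  refine ((hasDerivAt_const a u).fun_div hden (pow_ne_zero 2 hxa)).congr_deriv ?_
  field_simp
  ring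

theorem hasDerivAt_sq_div_add_sq (hxa : x + a ≠ 0) :
    HasDerivAt (fun α : ℝ => α ^ 2 / (x + α) ^ 2) (2 * a * x / (x + a) ^ 3) a := by
  have hden : HasDerivAt (fun α : ℝ => (x + α) ^ 2) (2 * (x + a)) a := by
    simpa using ((hasDerivAt_id a).const_add x).fun_pow 2
  refine ((hasDerivAt_pow 2 a).fun_div hden (pow_ne_zero 2 hxa)).congr_deriv ?_
  field_simp
  ring

end Derivatives

theorem hasDerivAt_predictiveRisk {ι : Type*} [Fintype ι] (s c : ι → ℝ) (σ : ℝ) {a : ℝ}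
    (hsa : ∀ i, s i ^ 2 + a ≠ 0) :
    HasDerivAt (fun α : ℝ => ∑ i, (α ^ 2 / ((s i) ^ 2 + α) ^ 2) * (c i) ^ 2
        + σ ^ 2 * ∑ i, (s i) ^ 4 / ((s i) ^ 2 + α) ^ 2)
      (2 * a * ∑ i, c i ^ 2 * (s i ^ 2 / (s i ^ 2 + a) ^ 3)
        - 2 * σ ^ 2 * ∑ i, s i ^ 4 / (s i ^ 2 + a) ^ 3) a := by
  have hbias := HasDerivAt.fun_sum (u := univ) fun i _ =>
    (hasDerivAt_sq_div_add_sq (hsa i)).mul_const (c i ^ 2)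
  have hnoise := (HasDerivAt.fun_sum (u := univ) fun i _ =>
    hasDerivAt_const_div_add_sq (s i ^ 4) (hsa i)).const_mul (σ ^ 2)
  refine (hbias.add hnoise).congr_deriv ?_
  simp only [mul_sum, sub_eq_add_neg, ← sum_neg_distrib, ← sum_add_distrib]
  exact sum_congr rfl fun i _ => by ring

theorem hasDerivAt_proT (r : ℕ) (hr : 0 < r) (s : Fin r → ℝ) (h : ℝ) {a : ℝ}
    (hsa : ∀ i, s i ^ 2 + a ≠ 0) :
    HasDerivAt (proT r hr s h)
      (2 * a * (s ⟨0, hr⟩ ^ 2 / (s ⟨0, hr⟩ ^ 2 + a) ^ 3)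
        - 2 * h * ∑ i, s i ^ 4 / (s i ^ 2 + a) ^ 3) a := by
  have hfun : proT r hr s h = fun α => α ^ 2 / (s ⟨0, hr⟩ ^ 2 + α) ^ 2
      + h * ∑ i, (s i) ^ 4 / ((s i) ^ 2 + α) ^ 2 := by
    funext α
    simp only [proT, add_comm α]
  rw [hfun]
  have hnoise := (HasDerivAt.fun_sum (u := univ) fun i _ =>
    hasDerivAt_const_div_add_sq (s i ^ 4) (hsa i)).const_mul h
  refine ((hasDerivAt_sq_div_add_sq (hsa ⟨0, hr⟩)).add hnoise).congr_deriv ?_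
  simp only [sum_neg_distrib, mul_neg, ← sub_eq_add_neg, mul_div_assoc, ← mul_sum]
  ring

theorem div_add_pow_three_le_of_pow_three_le {x y a : ℝ} (hx : 0 < x) (hxy : x ≤ y) (ha : 0 < a)
    (hcube : a ^ 3 ≤ x * y ^ 2) : y / (y + a) ^ 3 ≤ x / (x + a) ^ 3 := by
  have hy : 0 < y := hx.trans_le hxy
  rw [div_le_div_iff₀ (by positivity) (by positivity)]
  -- `x (y + a)³ - y (x + a)³ = (y - x) (x y (x + y) + 3 a x y - a³)`
  have hfactor : 0 ≤ x * y * (x + y) + 3 * a * x * y - a ^ 3 := by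
    nlinarith [mul_pos (mul_pos hx hy) hx, mul_pos (mul_pos ha hx) hy]
  nlinarith [mul_nonneg (sub_nonneg.2 hxy) hfactor]

theorem pow_three_le_of_le_rpow {a x y : ℝ} (hx : 0 ≤ x) (hy : 0 ≤ y)
    (h : a ≤ x ^ ((4 : ℝ) / 3) * y ^ ((2 : ℝ) / 3)) (ha : 0 ≤ a) : a ^ 3 ≤ x ^ 4 * y ^ 2 := by
  have hcube : (x ^ ((4 : ℝ) / 3) * y ^ ((2 : ℝ) / 3)) ^ 3 = x ^ 4 * y ^ 2 := by
    rw [mul_pow, ← Real.rpow_natCast, ← Real.rpow_natCast (y ^ _), ← Real.rpow_mul hx,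
      ← Real.rpow_mul hy]
    norm_num
  exact hcube ▸ pow_le_pow_left₀ ha h 3

theorem predictive_risk_deriv_nonneg_at_proT_minimizer_general
    (r : ℕ) (hr : 0 < r) (s : Fin r → ℝ)
    (hpos : ∀ i, 0 < s i) (hmax : ∀ i, s i ≤ s ⟨0, hr⟩)
    (c : Fin r → ℝ) (hc : 0 < ∑ i, (c i) ^ 2)
    (σ : ℝ)
    (h : ℝ) (hh : h = σ ^ 2 / ∑ i, (c i) ^ 2)
    (p : ℝ → ℝ)
    (hp : ∀ α : ℝ, p α = ∑ i, (α ^ 2 / ((s i) ^ 2 + α) ^ 2) * (c i) ^ 2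
        + σ ^ 2 * ∑ i, (s i) ^ 4 / ((s i) ^ 2 + α) ^ 2)
    (a : ℝ) (ha : a ∈ Set.Ioo (0 : ℝ) ((s ⟨0, hr⟩) ^ 2 / 2))
    (hamin : IsMinOn (proT r hr s h) (Set.Icc 0 ((s ⟨0, hr⟩) ^ 2 / 2)) a)
    (hbound : a ≤ (s ⟨0, hr⟩) ^ ((4 : ℝ) / 3) *
      (Finset.univ.inf' ⟨⟨0, hr⟩, Finset.mem_univ _⟩ s) ^ ((2 : ℝ) / 3)) :
    0 ≤ deriv p a := by
  obtain ⟨ha0, ha1⟩ := ha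
  set s₀ := s ⟨0, hr⟩
  set m := univ.inf' ⟨⟨0, hr⟩, mem_univ _⟩ s
  have hsa : ∀ i, s i ^ 2 + a ≠ 0 := fun i => by positivity
  have hcrit := (hamin.isLocalMin (Icc_mem_nhds ha0 ha1)).hasDerivAt_eq_zero
    (hasDerivAt_proT r hr s h hsa)
  have hnoise : σ ^ 2 * ∑ i, s i ^ 4 / (s i ^ 2 + a) ^ 3
      = a * ∑ i, c i ^ 2 * (s₀ ^ 2 / (s₀ ^ 2 + a) ^ 3) := by
    rw [← sum_mul, show σ ^ 2 = h * ∑ i, c i ^ 2 by rw [hh]; field_simp]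
    linear_combination -(∑ i, c i ^ 2) / 2 * hcrit
  have hm : 0 < m := (lt_inf'_iff _).2 fun i _ => hpos i
  have hcube := pow_three_le_of_le_rpow (hpos _).le hm.le hbound ha0.le
  have hweight : ∀ i, s₀ ^ 2 / (s₀ ^ 2 + a) ^ 3 ≤ s i ^ 2 / (s i ^ 2 + a) ^ 3 := fun i => by
    refine div_add_pow_three_le_of_pow_three_le (pow_pos (hpos i) 2)
      (pow_le_pow_left₀ (hpos i).le (hmax i) 2) ha0 ?_
    calc a ^ 3 ≤ s₀ ^ 4 * m ^ 2 := hcube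
      _ ≤ s₀ ^ 4 * s i ^ 2 := by gcongr; exact inf'_le _ (mem_univ i)
      _ = s i ^ 2 * (s₀ ^ 2) ^ 2 := by ring
  rw [show p = _ from funext hp, (hasDerivAt_predictiveRisk s c σ hsa).deriv, mul_assoc 2 (σ ^ 2),
    hnoise, ← mul_assoc, ← mul_sub, ← sum_sub_distrib]
  exact mul_nonneg (by positivity) (sum_nonneg fun i _ =>
    by simpa only [← mul_sub] using mul_nonneg (sq_nonneg (c i)) (sub_nonneg.2 (hweight i)))

/-- Let `ρ² = ∑ (c i)² > 0`, `σ > 0`, `h = σ²/ρ²` and let `p` be the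
predictive risk. If `α* ∈ (0, (s 0)²/2)` is a minimizer of `T_h` over `[0, (s 0)²/2]`
with `α* ≤ (s 0)^{4/3} (minᵢ s i)^{2/3}`, then `deriv p α* ≥ 0`. -/
theorem predictive_risk_deriv_nonneg_at_proT_minimizer
    (r : ℕ) (hr : 0 < r) (s : Fin r → ℝ)
    (hpos : ∀ i, 0 < s i) (hmax : ∀ i, s i ≤ s ⟨0, hr⟩)
    (c : Fin r → ℝ) (hc : 0 < ∑ i, (c i) ^ 2)
    (σ : ℝ) (hσ : 0 < σ)
    (h : ℝ) (hh : h = σ ^ 2 / ∑ i, (c i) ^ 2)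
    (p : ℝ → ℝ)
    (hp : ∀ α : ℝ, p α = ∑ i, (α ^ 2 / ((s i) ^ 2 + α) ^ 2) * (c i) ^ 2
        + σ ^ 2 * ∑ i, (s i) ^ 4 / ((s i) ^ 2 + α) ^ 2)
    (a : ℝ) (ha : a ∈ Set.Ioo (0 : ℝ) ((s ⟨0, hr⟩) ^ 2 / 2))
    (hamin : IsMinOn (proT r hr s h) (Set.Icc 0 ((s ⟨0, hr⟩) ^ 2 / 2)) a)
    (hbound : a ≤ (s ⟨0, hr⟩) ^ ((4 : ℝ) / 3) *
      (Finset.univ.inf' ⟨⟨0, hr⟩, Finset.mem_univ _⟩ s) ^ ((2 : ℝ) / 3)) :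
    0 ≤ deriv p a :=
  predictive_risk_deriv_nonneg_at_proT_minimizer_general r hr s hpos hmax c hc σ h hh p hp a ha
    hamin hbound
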